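/- arXiv:cond-mat/9707255 — 2 statements merged into one kernel-verified Lean document; each statement's English description precedes it below -/
import Mathlib

section
/- With the setup of a normalized eigenvector Φ = ∑ φ_{(j,k)} Ψⱼ⊗Γₖ of H = H_S⊗1 + 1⊗H_B + H' with eigenvalue E, suppose additionally there is D > 0 such that V_{j,k;j',k'} = 0 whenever |(εⱼ + Bₖ) − (ε_{j'} + B_{k'})| > D. Then |φ_{(j,k)}| ≤ (1/n(j,k)!) (λ/D)^{n(j,k)}, where n(j,k) = ⌊|E − (εⱼ + Bₖ)|/D⌋ and λ = sup_{j,k} ∑_{j',k'} |V_{j,k;j',k'}|. -/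
/-!
Write `e p` for the unperturbed energy of the basis state `p`. Row `p` of the eigenvalue equation
reads `(E - e p) φ p = (V φ) p`. Since `V` only couples states whose energies differ by at most `D`,
every `q` contributing to `(V φ) p` is at least `(k - 1) D` away from `E` when `p` is `k D` away.
Induction on `k` then gives `k D ‖φ p‖ ≤ λ · C (λ/D)^(k-1)/(k-1)!`, starting from `‖φ p‖ ≤ C`.
-/

open Matrix Finset

variable {ι 𝕜 : Type*} [Fintype ι] [RCLike 𝕜]

lemma norm_le_one_of_sum_norm_sq_eq_one {φ : ι → 𝕜} (hφ : ∑ q, ‖φ q‖ ^ 2 = 1) (p : ι) :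
    ‖φ p‖ ≤ 1 := by
  have hsq : ‖φ p‖ ^ 2 ≤ 1 :=
    hφ ▸ single_le_sum (f := fun q => ‖φ q‖ ^ 2) (fun _ _ => sq_nonneg _) (mem_univ p)
  exact (sq_le_one_iff₀ (norm_nonneg _)).mp hsq

lemma ofReal_sub_mul_eq_mulVec_apply [DecidableEq ι] {e : ι → ℝ} {V : Matrix ι ι 𝕜} {φ : ι → 𝕜}
    {E : ℝ} (heig : (diagonal (fun p => (e p : 𝕜)) + V) *ᵥ φ = (E : 𝕜) • φ) (p : ι) :
    ((E - e p : ℝ) : 𝕜) * φ p = (V *ᵥ φ) p := by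
  have hp := congrFun heig p
  simp only [add_mulVec, mulVec_diagonal, Pi.add_apply, Pi.smul_apply, smul_eq_mul] at hp
  push_cast
  linear_combination -hp

lemma norm_mulVec_apply_le {V : Matrix ι ι 𝕜} {φ : ι → 𝕜} {p : ι} {lam c : ℝ}
    (hlam : ∑ q, ‖V p q‖ ≤ lam) (hc : 0 ≤ c) (hφ : ∀ q, V p q ≠ 0 → ‖φ q‖ ≤ c) :
    ‖(V *ᵥ φ) p‖ ≤ lam * c :=
  calc ‖(V *ᵥ φ) p‖ ≤ ∑ q, ‖V p q‖ * ‖φ q‖ := by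
        simpa only [mulVec, dotProduct, norm_mul] using norm_sum_le univ fun q => V p q * φ q
    _ ≤ ∑ q, ‖V p q‖ * c := by
        refine sum_le_sum fun q _ => ?_
        by_cases hV : V p q = 0
        · simp [hV]
        · exact mul_le_mul_of_nonneg_left (hφ q hV) (norm_nonneg _)
    _ = (∑ q, ‖V p q‖) * c := (sum_mul ..).symm
    _ ≤ lam * c := mul_le_mul_of_nonneg_right hlam hc

theorem norm_le_of_band_limited_coupling {e : ι → ℝ} {V : Matrix ι ι 𝕜} {φ : ι → 𝕜}
    {E lam D C : ℝ} (hD : 0 < D) (hlam : ∀ p, ∑ q, ‖V p q‖ ≤ lam)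
    (hband : ∀ p q, D < |e p - e q| → V p q = 0)
    (heig : ∀ p, ((E - e p : ℝ) : 𝕜) * φ p = (V *ᵥ φ) p) (hC : ∀ p, ‖φ p‖ ≤ C) :
    ∀ (k : ℕ) (p : ι), k * D ≤ |E - e p| → ‖φ p‖ ≤ C * (lam / D) ^ k / k.factorial := by
  intro k
  induction k with
  | zero => intro p _; simpa using hC p
  | succ k ih =>
    intro p hp
    have hC0 : 0 ≤ C := (norm_nonneg _).trans (hC p)
    have hlam0 : 0 ≤ lam := (sum_nonneg fun _ _ => norm_nonneg _).trans (hlam p)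
    have hnear : ∀ q, V p q ≠ 0 → ‖φ q‖ ≤ C * (lam / D) ^ k / k.factorial := by
      intro q hV
      have hpq : |e q - e p| ≤ D := abs_sub_comm (e p) (e q) ▸ not_lt.mp (mt (hband p q) hV)
      refine ih q ?_
      have := abs_sub_le E (e q) (e p)
      push_cast at hp
      linarith
    have hstep : |E - e p| * ‖φ p‖ ≤ lam * (C * (lam / D) ^ k / k.factorial) := by
      rw [← RCLike.norm_ofReal (K := 𝕜), ← norm_mul, heig p]
      exact norm_mulVec_apply_le (hlam p) (by positivity) hnear
    have hkD : 0 < ((k + 1 : ℕ) : ℝ) * D := by positivity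
    have hφp : ‖φ p‖ ≤ lam * (C * (lam / D) ^ k / k.factorial) / ((k + 1 : ℕ) * D) := by
      rw [le_div_iff₀' hkD]
      exact (mul_le_mul_of_nonneg_right hp (norm_nonneg _)).trans hstep
    refine hφp.trans_eq ?_
    rw [Nat.factorial_succ, pow_succ]
    push_cast
    field_simp

theorem stmt_12 (n N : ℕ) (ε : Fin n → ℝ) (B : Fin N → ℝ)
    (V : Matrix (Fin n × Fin N) (Fin n × Fin N) ℂ)
    (H : Matrix (Fin n × Fin N) (Fin n × Fin N) ℂ)
    (hH : H = Matrix.diagonal (fun p => ((ε p.1 + B p.2 : ℝ) : ℂ)) + V)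
    (lam : ℝ)
    (hlam : ∀ p, ∑ p', ‖V p p'‖ ≤ lam)
    (D : ℝ) (hD : 0 < D)
    (hband : ∀ p p', |(ε p.1 + B p.2) - (ε p'.1 + B p'.2)| > D → V p p' = 0)
    (φ : Fin n × Fin N → ℂ) (hnorm : ∑ p, ‖φ p‖ ^ 2 = 1)
    (E : ℝ) (heig : H.mulVec φ = (E : ℂ) • φ) :
    ∀ p, ‖φ p‖ ≤
      (1 / (Nat.factorial ⌊|E - (ε p.1 + B p.2)| / D⌋₊ : ℝ)) *
        (lam / D) ^ (⌊|E - (ε p.1 + B p.2)| / D⌋₊) := by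
  subst hH
  intro p
  have hfloor : (⌊|E - (ε p.1 + B p.2)| / D⌋₊ : ℝ) * D ≤ |E - (ε p.1 + B p.2)| :=
    (le_div_iff₀ hD).mp (Nat.floor_le (by positivity))
  have hrow := ofReal_sub_mul_eq_mulVec_apply heig
  have hφ := norm_le_one_of_sum_norm_sq_eq_one hnorm
  have h := norm_le_of_band_limited_coupling hD hlam hband hrow hφ _ p hfloor
  rwa [one_mul, ← one_div_mul_eq_div] at h
end

section
/- Let G₁, G₂, … be complex numbers with G₁ = 0 satisfying |G_{m+1}| ≤ (|G_m| + |G_m|²)(1 + aL^{−1/3} + bL^{−1/2}m^{1/2}) + cL^{−1}(1 + aL^{−1/3} + bL^{−1/2}m^{1/2}) + dL^{−1} + eL^{−3/2}m^{3/2}, for positive constants a,b,c,d,e and L ≥ 1. Then there are constants c₂ > 0 (sufficiently small) and C (depending only on a,b,c,d,e) such that |G_m| ≤ C·L^{−2/3} for all m with 1 ≤ m ≤ c₂L^{1/3}. -/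
/-! Put `ε = L^(-1/3)`. While `m ≤ L^(1/3)`, the terms `L^(-1/2) m^(1/2)` and `L^(-3/2) m^(3/2)`
are at most `ε` and `ε³ = L⁻¹`, so `x m = ‖G m‖` obeys `x (m+1) ≤ (x m + x m²)(1 + Kε) + δ` with
`K = a + b` and `δ = Dε³`. Induction gives the linear bound `x m ≤ 2δ(m - 1)`: as long as
`m ≤ c₂ ε⁻¹` with `c₂` small, the quadratic term and the relative error `Kε · x m` cost at most one
extra `δ` per step. At `m ≈ c₂ ε⁻¹` this is `2Dc₂ ε² = 2Dc₂ L^(-2/3)`. -/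

theorem le_two_mul_sub_one_of_quadratic_recursion {x : ℕ → ℝ} {κ δ N : ℝ}
    (hκ : 0 ≤ κ) (hδ : 0 ≤ δ) (hx : ∀ m, 0 ≤ x m) (hx₁ : x 1 = 0)
    (hsmall : 2 * N * κ + 4 * δ * N ^ 2 * (1 + κ) ≤ 1)
    (hrec : ∀ m : ℕ, 1 ≤ m → (m + 1 : ℝ) ≤ N → x (m + 1) ≤ (x m + x m ^ 2) * (1 + κ) + δ) :
    ∀ m : ℕ, 1 ≤ m → (m : ℝ) ≤ N → x m ≤ 2 * δ * (m - 1) := by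
  intro m hm
  induction m, hm using Nat.le_induction with
  | base => simp [hx₁]
  | succ m hm ih =>
    intro hmN
    push_cast at hmN ⊢
    set y := 2 * δ * (m - 1) with hy
    have hxy : x m ≤ y := ih (by linarith)
    have hy₀ : 0 ≤ y := le_trans (hx m) hxy
    have hyN : y ≤ 2 * δ * N := by rw [hy]; gcongr; linarith
    have herr : y * κ + y ^ 2 * (1 + κ) ≤ δ := by
      have h1 : y * κ ≤ 2 * δ * N * κ := by gcongr
      have h2 : y ^ 2 * (1 + κ) ≤ (2 * δ * N) ^ 2 * (1 + κ) := by gcongr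
      nlinarith
    have hmono : (x m + x m ^ 2) * (1 + κ) ≤ (y + y ^ 2) * (1 + κ) := by
      gcongr; exact hx m
    calc x (m + 1) ≤ (x m + x m ^ 2) * (1 + κ) + δ := hrec m hm hmN
      _ ≤ (y + y ^ 2) * (1 + κ) + δ := by linarith
      _ ≤ 2 * δ * (m + 1 - 1) := by linarith

theorem Real.rpow_neg_mul_rpow_le_of_le_rpow_one_third {L m p : ℝ} (hL : 0 < L) (hm : 0 ≤ m)
    (hmL : m ≤ L ^ (1 / 3 : ℝ)) (hp : 0 ≤ p) : L ^ (-p) * m ^ p ≤ L ^ (-(2 * p / 3)) :=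
  calc L ^ (-p) * m ^ p ≤ L ^ (-p) * (L ^ (1 / 3 : ℝ)) ^ p := by gcongr
    _ = L ^ (-(2 * p / 3)) := by
      rw [← Real.rpow_mul hL.le, ← Real.rpow_add hL]; ring_nf

theorem quadratic_recursion_rhs_le {a b c d e x ε s ι u : ℝ} (ha : 0 ≤ a) (hb : 0 ≤ b)
    (hc : 0 ≤ c) (he : 0 ≤ e) (hx : 0 ≤ x) (hε : ε ≤ 1) (hs : s ≤ ε) (hι : 0 ≤ ι) (hu : u ≤ ι) :
    (x + x ^ 2) * (1 + a * ε + b * s) + c * ι * (1 + a * ε + b * s) + d * ι + e * u ≤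
      (x + x ^ 2) * (1 + (a + b) * ε) + (c * (1 + (a + b)) + d + e) * ι := by
  have hmul : 1 + a * ε + b * s ≤ 1 + (a + b) * ε := by nlinarith
  have hmul₁ : 1 + a * ε + b * s ≤ 1 + (a + b) := by nlinarith
  have h1 : (x + x ^ 2) * (1 + a * ε + b * s) ≤ (x + x ^ 2) * (1 + (a + b) * ε) := by
    gcongr
  have h2 : c * ι * (1 + a * ε + b * s) ≤ c * ι * (1 + (a + b)) := by gcongr
  have h3 : e * u ≤ e * ι := by gcongr
  linarith

theorem recursion_le_of_le_rpow_one_third {a b c d e L x y m : ℝ} (ha : 0 ≤ a) (hb : 0 ≤ b)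
    (hc : 0 ≤ c) (he : 0 ≤ e) (hL : 1 ≤ L) (hx : 0 ≤ x) (hm : 0 ≤ m)
    (hmL : m ≤ L ^ (1 / 3 : ℝ))
    (hy : y ≤ (x + x ^ 2) *
              (1 + a * L ^ (-(1:ℝ)/3) + b * L ^ (-(1:ℝ)/2) * m ^ ((1:ℝ)/2))
            + c * L⁻¹ *
              (1 + a * L ^ (-(1:ℝ)/3) + b * L ^ (-(1:ℝ)/2) * m ^ ((1:ℝ)/2))
            + d * L⁻¹ + e * L ^ (-(3:ℝ)/2) * m ^ ((3:ℝ)/2)) :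
    y ≤ (x + x ^ 2) * (1 + (a + b) * L ^ (-(1:ℝ)/3)) + (c * (1 + (a + b)) + d + e) * L⁻¹ := by
  have hL₀ : 0 < L := by linarith
  have hs := Real.rpow_neg_mul_rpow_le_of_le_rpow_one_third hL₀ hm hmL (p := 1 / 2) (by norm_num)
  have hu := Real.rpow_neg_mul_rpow_le_of_le_rpow_one_third hL₀ hm hmL (p := 3 / 2) (by norm_num)
  rw [show -(2 * (1 / 2 : ℝ) / 3) = -(1 / 3) by norm_num] at hs
  rw [show -(2 * (3 / 2 : ℝ) / 3) = -1 by norm_num, Real.rpow_neg_one] at hu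
  simp only [neg_div] at hy ⊢
  rw [mul_assoc b, mul_assoc e] at hy
  refine hy.trans (quadratic_recursion_rhs_le ha hb hc he hx ?_ hs (by positivity) hu)
  exact Real.rpow_le_one_of_one_le_of_nonpos hL (by norm_num)

theorem bootstrap_smallness {K D c₂ ε : ℝ} (hK : 0 ≤ K) (hD : 0 ≤ D) (hc₂ : 0 ≤ c₂)
    (hc₂KD : 8 * c₂ * (1 + D) * (1 + K) ≤ 1) (hε₀ : 0 < ε) (hε₁ : ε ≤ 1) :
    2 * (c₂ * ε⁻¹) * (K * ε) + 4 * (D * ε ^ 3) * (c₂ * ε⁻¹) ^ 2 * (1 + K * ε) ≤ 1 := by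
  have hsimp : 2 * (c₂ * ε⁻¹) * (K * ε) + 4 * (D * ε ^ 3) * (c₂ * ε⁻¹) ^ 2 * (1 + K * ε)
      = 2 * c₂ * K + 4 * D * c₂ ^ 2 * (ε * (1 + K * ε)) := by
    field_simp
  have hε : ε * (1 + K * ε) ≤ 1 * (1 + K) := by
    gcongr; nlinarith
  have hKD : K ≤ (1 + D) * (1 + K) ∧ D * (1 + K) ≤ (1 + D) * (1 + K) := by
    constructor <;> nlinarith
  have h₁ : 8 * c₂ * K ≤ 1 := by nlinarith [mul_le_mul_of_nonneg_left hKD.1 hc₂]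
  have h₂ : 8 * c₂ * (D * (1 + K)) ≤ 1 := by nlinarith [mul_le_mul_of_nonneg_left hKD.2 hc₂]
  rw [hsimp]
  nlinarith [mul_le_mul_of_nonneg_left hε (by positivity : 0 ≤ 4 * D * c₂ ^ 2)]

theorem stmt_14 (a b c d e : ℝ) (ha : 0 < a) (hb : 0 < b) (hc : 0 < c)
    (hd : 0 < d) (he : 0 < e) :
    ∃ c₂ > (0:ℝ), ∃ C > (0:ℝ), ∀ (L : ℝ), 1 ≤ L → ∀ (G : ℕ → ℂ), G 1 = 0 →
      (∀ m : ℕ, 1 ≤ m →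
        ‖G (m + 1)‖ ≤
          (‖G m‖ + ‖G m‖ ^ 2) *
              (1 + a * L ^ (-(1:ℝ)/3) + b * L ^ (-(1:ℝ)/2) * (m : ℝ) ^ ((1:ℝ)/2))
            + c * L⁻¹ *
              (1 + a * L ^ (-(1:ℝ)/3) + b * L ^ (-(1:ℝ)/2) * (m : ℝ) ^ ((1:ℝ)/2))
            + d * L⁻¹ + e * L ^ (-(3:ℝ)/2) * (m : ℝ) ^ ((3:ℝ)/2)) →
      ∀ m : ℕ, 1 ≤ m → (m : ℝ) ≤ c₂ * L ^ ((1:ℝ)/3) →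
        ‖G m‖ ≤ C * L ^ (-(2:ℝ)/3) := by
  set K := a + b
  set D := c * (1 + K) + d + e
  set c₂ := 1 / (8 * (1 + D) * (1 + K))
  have hc₂ : 8 * c₂ * (1 + D) * (1 + K) = 1 := by
    simp only [c₂]; field_simp; exact div_self (by positivity)
  have hc₂₁ : c₂ ≤ 1 := by
    have : 1 ≤ (1 + D) * (1 + K) := by nlinarith [(by positivity : 0 ≤ D), (by positivity : 0 ≤ K)]
    nlinarith [(by positivity : 0 < c₂)]
  refine ⟨c₂, by positivity, 2 * D * c₂, by positivity, fun L hL G hG₁ hrec m hm hmN => ?_⟩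
  have hL₀ : 0 < L := by linarith
  set ε := L ^ (-(1:ℝ)/3)
  have hε₀ : 0 < ε := by positivity
  have hε₁ : ε ≤ 1 := Real.rpow_le_one_of_one_le_of_nonpos hL (by norm_num)
  have hLε : L ^ ((1:ℝ)/3) = ε⁻¹ := by rw [← Real.rpow_neg hL₀.le]; ring_nf
  have hL₁ : L⁻¹ = ε ^ 3 := by
    rw [← Real.rpow_natCast, ← Real.rpow_mul hL₀.le, ← Real.rpow_neg_one]; norm_num
  have hL₂ : L ^ (-(2:ℝ)/3) = ε ^ 2 := by
    rw [← Real.rpow_natCast, ← Real.rpow_mul hL₀.le]; norm_num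
  have hN : c₂ * ε⁻¹ ≤ L ^ ((1:ℝ)/3) := by
    rw [hLε]; exact mul_le_of_le_one_left (by positivity) hc₂₁
  have hbound := le_two_mul_sub_one_of_quadratic_recursion (x := fun m => ‖G m‖)
    (κ := K * ε) (δ := D * ε ^ 3) (N := c₂ * ε⁻¹) (by positivity) (by positivity)
    (fun m => norm_nonneg _) (by simp [hG₁])
    (bootstrap_smallness (by positivity) (by positivity) (by positivity) hc₂.le hε₀ hε₁)
    (fun k hk hkN => by
      simpa only [hL₁] using recursion_le_of_le_rpow_one_third ha.le hb.le hc.le he.le hL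
        (norm_nonneg _) (by positivity) (by linarith) (hrec k hk))
    m hm (by rwa [← hLε])
  calc ‖G m‖ ≤ 2 * (D * ε ^ 3) * (m - 1) := hbound
    _ ≤ 2 * (D * ε ^ 3) * (c₂ * ε⁻¹) := by gcongr; rw [← hLε]; linarith
    _ = 2 * D * c₂ * L ^ (-(2:ℝ)/3) := by rw [hL₂]; field_simp
end
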